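/- Let S be a step set whose only horizontal step is (1,0) (i.e. (a,0) ∈ S if and only if a = 1) and such that every (a,b) ∈ S with b > 0 satisfies a ≤ b (the slope condition for the Catalan boundary (i+1)). Let P(t) = Σ_{n≥0} p_n tⁿ, let D_0(t) = Σ_{n≥0} a_{n,n} tⁿ, and let D_1(t) = Σ_{n≥1} a_{n−1,n} tⁿ. Then in ℚ⟦t⟧: P(t) · (1 + D_1(t)) = D_0(t). -/

import Mathlib

/-- x-coordinate of the `j`-th node of the path `p` (partial sum of first coordinates). -/
def xPart (p : List (ℕ × ℕ)) (j : ℕ) : ℕ := ((p.take j).map Prod.fst).sum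

/-- y-coordinate of the `j`-th node of the path `p` (partial sum of second coordinates). -/
def yPart (p : List (ℕ × ℕ)) (j : ℕ) : ℕ := ((p.take j).map Prod.snd).sum

/-- `p` is an `S`-path from `(0,0)` to `(n,m)`. -/
def IsPath (S : Set (ℕ × ℕ)) (n m : ℕ) (p : List (ℕ × ℕ)) : Prop :=
  (∀ st ∈ p, st ∈ S) ∧ xPart p p.length = n ∧ yPart p p.length = m

/-- `p` is Catalan: every node `(x, y)` satisfies `x ≤ y`. -/
def IsCatalan (p : List (ℕ × ℕ)) : Prop :=
  ∀ j ≤ p.length, xPart p j ≤ yPart p j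

/-- The number of `S`-paths from `(0,0)` to `(n,m)`. -/
noncomputable def aCount (S : Set (ℕ × ℕ)) (n m : ℕ) : ℕ :=
  Set.ncard {p : List (ℕ × ℕ) | IsPath S n m p}

/-- The number of Catalan `S`-paths from `(0,0)` to `(n,n)`. -/
noncomputable def pCatalan (S : Set (ℕ × ℕ)) (n : ℕ) : ℕ :=
  Set.ncard {p : List (ℕ × ℕ) | IsPath S n n p ∧ IsCatalan p}

/-! First-passage decomposition. A non-Catalan path to `(n+1, n+1)` has a first node with
`x > y`. The step `(a, b)` into it has `a > b`, which the slope condition forbids unless `b = 0`,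
so it is the step `(1, 0)` and the node before it is some `(i, i)`. The path thus splits into a
Catalan path to `(i, i)`, the step `(1, 0)`, and a translate of an arbitrary path to `(j, j+1)`
with `i + j = n`. Hence `a_{n+1,n+1} = p_{n+1} + ∑_{i+j=n} p_i a_{j,j+1}`, while every path to
`(0,0)` is Catalan; this is the identity coefficientwise, as `D₁ = t · ∑ a_{j,j+1} tʲ`. -/

section LatticePath

open Finset

variable {S : Set (ℕ × ℕ)} {p q : List (ℕ × ℕ)} {i j n m : ℕ}

lemma xPart_append (p q : List (ℕ × ℕ)) (j : ℕ) :
    xPart (p ++ q) j = xPart p j + xPart q (j - p.length) := by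
  simp [xPart, List.take_append]

lemma yPart_append (p q : List (ℕ × ℕ)) (j : ℕ) :
    yPart (p ++ q) j = yPart p j + yPart q (j - p.length) := by
  simp [yPart, List.take_append]

@[simp] lemma xPart_zero (p : List (ℕ × ℕ)) : xPart p 0 = 0 := by
  simp [xPart]

@[simp] lemma yPart_zero (p : List (ℕ × ℕ)) : yPart p 0 = 0 := by
  simp [yPart]

lemma xPart_append_of_le (q : List (ℕ × ℕ)) (hj : j ≤ p.length) :
    xPart (p ++ q) j = xPart p j := by
  simp [xPart_append, Nat.sub_eq_zero_of_le hj]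

lemma yPart_append_of_le (q : List (ℕ × ℕ)) (hj : j ≤ p.length) :
    yPart (p ++ q) j = yPart p j := by
  simp [yPart_append, Nat.sub_eq_zero_of_le hj]

@[simp] lemma xPart_length (p : List (ℕ × ℕ)) : xPart p p.length = (p.map Prod.fst).sum := by
  simp [xPart]

@[simp] lemma yPart_length (p : List (ℕ × ℕ)) : yPart p p.length = (p.map Prod.snd).sum := by
  simp [yPart]

lemma xPart_le_sum (p : List (ℕ × ℕ)) (j : ℕ) : xPart p j ≤ (p.map Prod.fst).sum := by
  simpa [xPart, List.map_take] using ((p.map Prod.fst).take_sublist j).sum_le_sum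

lemma isPath_iff : IsPath S n m p ↔
    (∀ s ∈ p, s ∈ S) ∧ (p.map Prod.fst).sum = n ∧ (p.map Prod.snd).sum = m := by
  simp [IsPath]

lemma IsPath.append {a b c d : ℕ} (hp : IsPath S a b p) (hq : IsPath S c d q) :
    IsPath S (a + c) (b + d) (p ++ q) := by
  rw [isPath_iff] at *
  grind

lemma IsPath.cons {s : ℕ × ℕ} (hs : s ∈ S) (hp : IsPath S n m p) :
    IsPath S (s.1 + n) (s.2 + m) (s :: p) := by
  rw [isPath_iff] at *
  grind

lemma IsPath.length_le (h00 : (0, 0) ∉ S) (hp : IsPath S n m p) : p.length ≤ n + m := by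
  obtain ⟨hS, rfl, rfl⟩ := isPath_iff.1 hp
  have hpos : ∀ k ∈ p.map (fun s => s.1 + s.2), 1 ≤ k := by
    simp only [List.mem_map]
    rintro _ ⟨⟨a, b⟩, hs, rfl⟩
    by_contra! h
    obtain ⟨rfl, rfl⟩ : a = 0 ∧ b = 0 := by omega
    exact h00 (hS _ hs)
  simpa [List.sum_map_add] using List.length_le_sum_of_one_le _ hpos

lemma setOf_isPath_finite (h00 : (0, 0) ∉ S) (n m : ℕ) : {p | IsPath S n m p}.Finite := by
  let T : Set (ℕ × ℕ) := Set.Iic n ×ˢ Set.Iic m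
  have : Finite T := (Set.finite_Iic n).prod (Set.finite_Iic m)
  refine ((List.finite_length_le T (n + m)).image (List.map Subtype.val)).subset fun p hp => ?_
  obtain ⟨-, hx, hy⟩ := isPath_iff.1 hp
  have hT : ∀ s ∈ p, s ∈ T := fun s hs =>
    ⟨hx ▸ List.le_sum_of_mem (List.mem_map_of_mem (f := Prod.fst) hs),
      hy ▸ List.le_sum_of_mem (List.mem_map_of_mem (f := Prod.snd) hs)⟩
  have hlen := IsPath.length_le h00 hp
  lift p to List T using hT
  exact ⟨p, by simpa using hlen, rfl⟩

lemma IsCatalan.of_append (h : IsCatalan (p ++ q)) : IsCatalan p := fun j hj => by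
  simpa [xPart_append_of_le q hj, yPart_append_of_le q hj] using
    h j (hj.trans (by simp))

lemma isCatalan_append_singleton_iff {s : ℕ × ℕ} :
    IsCatalan (p ++ [s]) ↔
      IsCatalan p ∧ (p.map Prod.fst).sum + s.1 ≤ (p.map Prod.snd).sum + s.2 := by
  have hx : xPart (p ++ [s]) (p.length + 1) = (p.map Prod.fst).sum + s.1 := by
    simp [xPart]
  have hy : yPart (p ++ [s]) (p.length + 1) = (p.map Prod.snd).sum + s.2 := by
    simp [yPart]
  refine ⟨fun h => ⟨IsCatalan.of_append h, hx ▸ hy ▸ h _ (by simp)⟩, fun ⟨hp, hs⟩ j hj => ?_⟩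
  rcases (show j ≤ p.length ∨ j = p.length + 1 by simp at hj; omega) with hj | rfl
  · simpa [xPart_append_of_le, yPart_append_of_le, hj] using hp j hj
  · rwa [hx, hy]

lemma isCatalan_of_isPath_zero (hp : IsPath S 0 m p) : IsCatalan p := fun j _ => by
  have := xPart_le_sum p j
  rw [(isPath_iff.1 hp).2.1] at this
  omega

lemma exists_eq_append_cons_of_not_isCatalan (h : ¬ IsCatalan p) :
    ∃ p₁ s p₂, p = p₁ ++ s :: p₂ ∧ IsCatalan p₁ ∧
      (p₁.map Prod.snd).sum + s.2 < (p₁.map Prod.fst).sum + s.1 := by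
  induction p using List.reverseRecOn with
  | nil => exact absurd (fun j hj => by simp_all) h
  | append_singleton q s ih =>
    by_cases hq : IsCatalan q
    · refine ⟨q, s, [], rfl, hq, ?_⟩
      by_contra! hs
      exact h (isCatalan_append_singleton_iff.2 ⟨hq, hs⟩)
    · obtain ⟨p₁, t, p₂, rfl, hp₁, ht⟩ := ih hq
      exact ⟨p₁, t, p₂ ++ [s], by simp, hp₁, ht⟩

lemma not_isCatalan_append_cons (hp : (p.map Prod.fst).sum = (p.map Prod.snd).sum)
    (q : List (ℕ × ℕ)) : ¬ IsCatalan (p ++ (1, 0) :: q) := fun h => by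
  have := IsCatalan.of_append (p := p ++ [(1, 0)]) (q := q) (by simpa using h)
  rw [isCatalan_append_singleton_iff] at this
  omega

lemma append_cons_inj {p₁ p₂ q₁ q₂ : List (ℕ × ℕ)}
    (hp : (p₁.map Prod.fst).sum = (p₁.map Prod.snd).sum) (hpc : IsCatalan p₁)
    (hq : (q₁.map Prod.fst).sum = (q₁.map Prod.snd).sum) (hqc : IsCatalan q₁)
    (h : p₁ ++ (1, 0) :: p₂ = q₁ ++ (1, 0) :: q₂) : p₁ = q₁ ∧ p₂ = q₂ := by
  rcases List.append_eq_append_iff.1 h with ⟨a, rfl, ha⟩ | ⟨a, rfl, ha⟩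
  · cases a with
    | nil => simpa using ha
    | cons b a =>
      obtain ⟨rfl, -⟩ := List.cons.inj ha
      exact absurd hqc (not_isCatalan_append_cons hp a)
  · cases a with
    | nil => simpa [eq_comm] using ha
    | cons b a =>
      obtain ⟨rfl, -⟩ := List.cons.inj ha
      exact absurd hpc (not_isCatalan_append_cons hq a)

variable (S) in
/-- Paths that leave the region `x ≤ y` for the first time by a step `(1, 0)` from `(i, i)`,
and then reach `(i + j + 1, i + j + 1)`. -/
def firstPassage (i j : ℕ) : Set (List (ℕ × ℕ)) :=
  (fun q : List (ℕ × ℕ) × List (ℕ × ℕ) => q.1 ++ (1, 0) :: q.2) ''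
    ({p | IsPath S i i p ∧ IsCatalan p} ×ˢ {p | IsPath S j (j + 1) p})

lemma firstPassage_subset (h10 : (1, 0) ∈ S) :
    firstPassage S i j ⊆ {p | IsPath S (i + j + 1) (i + j + 1) p} := by
  rintro _ ⟨⟨p₁, p₂⟩, ⟨⟨hp₁, -⟩, hp₂⟩, rfl⟩
  have := hp₁.append (IsPath.cons h10 hp₂)
  show IsPath S _ _ _
  convert this using 1 <;> omega

lemma not_isCatalan_of_mem_firstPassage (hp : p ∈ firstPassage S i j) : ¬ IsCatalan p := by
  obtain ⟨⟨p₁, p₂⟩, ⟨⟨hp₁, -⟩, -⟩, rfl⟩ := hp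
  obtain ⟨-, hx, hy⟩ := isPath_iff.1 hp₁
  exact not_isCatalan_append_cons (hx.trans hy.symm) p₂

lemma injOn_firstPassage :
    Set.InjOn (fun q : List (ℕ × ℕ) × List (ℕ × ℕ) => q.1 ++ (1, 0) :: q.2)
      ({p | IsPath S i i p ∧ IsCatalan p} ×ˢ {p | IsPath S j (j + 1) p}) := by
  rintro ⟨p₁, p₂⟩ ⟨⟨hp₁, hc⟩, -⟩ ⟨q₁, q₂⟩ ⟨⟨hq₁, hd⟩, -⟩ h
  obtain ⟨-, hpx, hpy⟩ := isPath_iff.1 hp₁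
  obtain ⟨-, hqx, hqy⟩ := isPath_iff.1 hq₁
  obtain ⟨rfl, rfl⟩ := append_cons_inj (hpx.trans hpy.symm) hc (hqx.trans hqy.symm) hd h
  rfl

lemma ncard_firstPassage : (firstPassage S i j).ncard = pCatalan S i * aCount S j (j + 1) := by
  rw [firstPassage, injOn_firstPassage.ncard_image, Set.ncard_prod, pCatalan, aCount]

lemma disjoint_firstPassage {i' j' : ℕ} (h : (i, j) ≠ (i', j')) :
    Disjoint (firstPassage S i j) (firstPassage S i' j') := by
  refine Set.disjoint_left.2 ?_
  rintro _ ⟨⟨p₁, p₂⟩, ⟨⟨hp₁, hc⟩, hp₂⟩, rfl⟩ ⟨⟨q₁, q₂⟩, ⟨⟨hq₁, hd⟩, hq₂⟩, heq⟩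
  obtain ⟨-, hpx, hpy⟩ := isPath_iff.1 hp₁
  obtain ⟨-, hqx, hqy⟩ := isPath_iff.1 hq₁
  obtain ⟨rfl, rfl⟩ := append_cons_inj (hqx.trans hqy.symm) hd (hpx.trans hpy.symm) hc heq
  obtain ⟨-, hpx₂, -⟩ := isPath_iff.1 hp₂
  obtain ⟨-, hqx₂, -⟩ := isPath_iff.1 hq₂
  exact h (by rw [← hpx, ← hqx, ← hpx₂, ← hqx₂])

lemma exists_mem_firstPassage_of_not_isCatalan (hhoriz : ∀ a : ℕ, (a, 0) ∈ S ↔ a = 1)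
    (hslope : ∀ a b : ℕ, (a, b) ∈ S → 0 < b → a ≤ b)
    (hp : IsPath S (n + 1) (n + 1) p) (hc : ¬ IsCatalan p) :
    ∃ x ∈ antidiagonal n, p ∈ firstPassage S x.1 x.2 := by
  obtain ⟨p₁, ⟨a, b⟩, p₂, rfl, hp₁, hcross⟩ := exists_eq_append_cons_of_not_isCatalan hc
  obtain ⟨hS, hx, hy⟩ := isPath_iff.1 hp
  have hab : (a, b) ∈ S := hS _ (by simp)
  have hdiag : (p₁.map Prod.fst).sum ≤ (p₁.map Prod.snd).sum := by
    simpa using hp₁ p₁.length le_rfl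
  obtain rfl : b = 0 := by
    by_contra hb
    have := hslope a b hab (Nat.pos_of_ne_zero hb)
    simp only at hcross
    omega
  obtain rfl := (hhoriz a).1 hab
  simp only [List.map_append, List.map_cons, List.sum_append, List.sum_cons] at hx hy hcross
  have hpath₁ : IsPath S (p₁.map Prod.fst).sum (p₁.map Prod.fst).sum p₁ :=
    isPath_iff.2 ⟨fun s hs => hS s (by simp [hs]), rfl, by omega⟩
  have hpath₂ : IsPath S (p₂.map Prod.fst).sum ((p₂.map Prod.fst).sum + 1) p₂ :=
    isPath_iff.2 ⟨fun s hs => hS s (by simp [hs]), rfl, by omega⟩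
  exact ⟨((p₁.map Prod.fst).sum, (p₂.map Prod.fst).sum), mem_antidiagonal.2 (by omega),
    ⟨p₁, p₂⟩, ⟨⟨hpath₁, hp₁⟩, hpath₂⟩, rfl⟩

lemma setOf_isPath_succ_eq (hhoriz : ∀ a : ℕ, (a, 0) ∈ S ↔ a = 1)
    (hslope : ∀ a b : ℕ, (a, b) ∈ S → 0 < b → a ≤ b) (n : ℕ) :
    {p | IsPath S (n + 1) (n + 1) p} = {p | IsPath S (n + 1) (n + 1) p ∧ IsCatalan p} ∪
      ⋃ x ∈ antidiagonal n, firstPassage S x.1 x.2 := by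
  ext p
  simp only [Set.mem_union, Set.mem_ofPred_eq, Set.mem_iUnion, exists_prop]
  refine ⟨fun hp => ?_, ?_⟩
  · by_cases hc : IsCatalan p
    · exact .inl ⟨hp, hc⟩
    · exact .inr (exists_mem_firstPassage_of_not_isCatalan hhoriz hslope hp hc)
  · rintro (⟨hp, -⟩ | ⟨x, hx, hp⟩)
    · exact hp
    · simpa [mem_antidiagonal.1 hx] using firstPassage_subset ((hhoriz 1).2 rfl) hp

lemma aCount_succ_self (h00 : (0, 0) ∉ S) (hhoriz : ∀ a : ℕ, (a, 0) ∈ S ↔ a = 1)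
    (hslope : ∀ a b : ℕ, (a, b) ∈ S → 0 < b → a ≤ b) (n : ℕ) :
    aCount S (n + 1) (n + 1) = pCatalan S (n + 1) +
      ∑ x ∈ antidiagonal n, pCatalan S x.1 * aCount S x.2 (x.2 + 1) := by
  have hfin := setOf_isPath_finite h00 (n + 1) (n + 1)
  have hsub : ∀ x ∈ antidiagonal n,
      firstPassage S x.1 x.2 ⊆ {p | IsPath S (n + 1) (n + 1) p} := fun x hx => by
    simpa [mem_antidiagonal.1 hx] using
      firstPassage_subset (i := x.1) (j := x.2) ((hhoriz 1).2 rfl)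
  have hdisj : Disjoint {p | IsPath S (n + 1) (n + 1) p ∧ IsCatalan p}
      (⋃ x ∈ antidiagonal n, firstPassage S x.1 x.2) := by
    refine Set.disjoint_left.2 fun p hp hp' => ?_
    obtain ⟨x, -, hx⟩ := Set.mem_iUnion₂.1 hp'
    exact not_isCatalan_of_mem_firstPassage hx hp.2
  rw [aCount, setOf_isPath_succ_eq hhoriz hslope,
    Set.ncard_union_eq hdisj (hfin.subset fun _ hp => hp.1)
      (hfin.subset (Set.iUnion₂_subset hsub)),
    ← Finset.set_biUnion_coe, (finite_toSet _).ncard_biUnion (fun x hx => hfin.subset (hsub x hx))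
      (fun x _ y _ hxy => disjoint_firstPassage hxy), finsum_mem_coe_finset]
  simp only [ncard_firstPassage, pCatalan]

lemma aCount_zero_self : aCount S 0 0 = pCatalan S 0 := by
  simp only [aCount, pCatalan]
  congr
  ext p
  exact ⟨fun hp => ⟨hp, isCatalan_of_isPath_zero hp⟩, And.left⟩

end LatticePath

theorem stmt3 (S : Set (ℕ × ℕ)) (h00 : (0, 0) ∉ S)
    (hhoriz : ∀ a : ℕ, (a, 0) ∈ S ↔ a = 1)
    (hslope : ∀ a b : ℕ, (a, b) ∈ S → 0 < b → a ≤ b)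
    (P D0 D1 : PowerSeries ℚ)
    (hP : P = PowerSeries.mk fun n => (pCatalan S n : ℚ))
    (hD0 : D0 = PowerSeries.mk fun n => (aCount S n n : ℚ))
    (hD1 : D1 = PowerSeries.mk fun n => match n with
      | 0 => 0
      | k + 1 => (aCount S k (k + 1) : ℚ)) :
    P * (1 + D1) = D0 := by
  open PowerSeries in
  have hD1X : D1 = X * mk fun k => (aCount S k (k + 1) : ℚ) := by
    ext (_ | k) <;> simp [hD1, coeff_succ_X_mul]
  rw [hD1X, mul_add, mul_one, mul_left_comm]
  ext (_ | n)
  · simp [hP, hD0, aCount_zero_self]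
  · rw [map_add, PowerSeries.coeff_succ_X_mul, PowerSeries.coeff_mul]
    simp [hP, hD0, aCount_succ_self h00 hhoriz hslope n]
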